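/- Let G and H be groups and let φ : G → H be a surjective group homomorphism whose kernel is contained in the center of G (i.e., G is a central extension of H). If H is polycyclic, then the commutator subgroup [G, G] is polycyclic. -/

import Mathlib

/-- A group is *Noetherian* if every subgroup is finitely generated. -/
def IsNoetherianGroup (G : Type*) [Group G] : Prop := ∀ K : Subgroup G, K.FG

/-- A group is *polycyclic* if and only if it is solvable and Noetherian. -/
def IsPolycyclic (G : Type*) [Group G] : Prop := IsSolvable G ∧ IsNoetherianGroup G

/-!
Pull the derived series of `H` back along `φ`: `Kᵢ = φ⁻¹(H⁽ⁱ⁾)` is normal in `G`, `K₀ = G`, and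
`Kₙ = ker φ` is central, so `⁅Kₙ, Kₙ⁆ = ⊥`. Since `H` is Noetherian, `Kᵢ₊₁ = ⟨S⟩ ⊔ Z` and
`Kᵢ = ⟨T⟩ ⊔ Z` with `S`, `T` finite and `Z = ker φ`. For fixed `t`, the map `k ↦ ⁅t, k⁆` is a
homomorphism on `Kᵢ₊₁` modulo `⁅Kᵢ₊₁, Kᵢ₊₁⁆` and kills the central `Z`, so `⁅Kᵢ, Kᵢ⁆` lies in
`⁅Kᵢ₊₁, Kᵢ₊₁⁆` extended by the finitely many commutators `⁅t, x⁆`, `t ∈ T`, `x ∈ T ∪ S`. These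
lie in `Kᵢ₊₁`, so modulo `⁅Kᵢ₊₁, Kᵢ₊₁⁆` they generate a finitely generated abelian group, and
Noetherianity climbs from `⁅Kᵢ₊₁, Kᵢ₊₁⁆` to `⁅Kᵢ, Kᵢ⁆`. Solvability is inherited from `G`, a
central extension of a solvable group.
-/

open Subgroup
open scoped commutatorElement

section FG

variable {G G' : Type*} [Group G] [Group G']

theorem Subgroup.FG.map {K : Subgroup G} (hK : K.FG) (f : G →* G') : (K.map f).FG := by
  obtain ⟨S, rfl, hS⟩ := (fg_iff K).1 hK
  exact (fg_iff _).2 ⟨f '' S, (MonoidHom.map_closure f S).symm, hS.image f⟩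

theorem Subgroup.fg_of_fg_map_of_fg_inf_ker (f : G →* G') {K : Subgroup G}
    (hmap : (K.map f).FG) (hker : (K ⊓ f.ker).FG) : K.FG := by
  obtain ⟨A, hA, hAfin⟩ := (fg_iff _).1 hmap
  obtain ⟨A', hA'K, hA'fin, hA'⟩ : ∃ A' ⊆ (K : Set G), A'.Finite ∧ f '' A' = A :=
    (Set.exists_subset_image_finite_and (p := (· = A))).1
      ⟨A, by rw [← coe_map, ← hA]; exact subset_closure, hAfin, rfl⟩
  obtain ⟨B, hB, hBfin⟩ := (fg_iff _).1 hker
  have hBK : B ⊆ K := fun b hb => (hB ▸ subset_closure hb : b ∈ K ⊓ f.ker).1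
  refine (fg_iff _).2 ⟨A' ∪ B, le_antisymm ((closure_le _).2 (Set.union_subset hA'K hBK)) ?_,
    hA'fin.union hBfin⟩
  intro k hk
  obtain ⟨u, hu, hfu⟩ : f k ∈ (closure A').map f := by
    rw [MonoidHom.map_closure, hA', hA]; exact mem_map_of_mem f hk
  have hv : u⁻¹ * k ∈ closure B := by
    rw [hB]; exact ⟨K.mul_mem (K.inv_mem ((closure_le K).2 hA'K hu)) hk, by simp [hfu]⟩
  simpa using mul_mem (closure_mono Set.subset_union_left hu)
    (closure_mono Set.subset_union_right hv)

end FG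

section Noetherian

variable {G : Type*} [Group G]

theorem isNoetherianGroup_subgroup_iff {M : Subgroup G} :
    IsNoetherianGroup M ↔ ∀ L ≤ M, L.FG := by
  refine ⟨fun hM L hLM => ?_, fun hM L => ?_⟩
  · simpa [subgroupOf_map_subtype, inf_of_le_left hLM] using (hM (L.subgroupOf M)).map M.subtype
  · have : Group.FG (L.map M.subtype) :=
      (Group.fg_iff_subgroup_fg _).2 (hM _ (map_subtype_le L))
    exact (Group.fg_iff_subgroup_fg L).1 <| Group.fg_of_surjective
      (f := ((L.equivMapOfInjective _ M.subtype_injective).symm : L.map M.subtype →* L))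
      (MulEquiv.surjective _)

theorem isNoetherianGroup_of_fg_of_commGroup (A : Type*) [CommGroup A] [Group.FG A] :
    IsNoetherianGroup A := by
  intro K
  have : Module.Finite ℤ (Additive A) :=
    Module.Finite.iff_addGroup_fg.2 (GroupFG.iff_add_fg.1 ‹_›)
  rw [fg_iff_add_fg, ← AddSubgroup.toIntSubmodule_toAddSubgroup K.toAddSubgroup,
    ← Submodule.fg_iff_addSubgroup_fg]
  exact IsNoetherian.noetherian _

open scoped IsMulCommutative in
theorem isNoetherianGroup_commutator_sup_closure {K : Subgroup G} [K.Normal]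
    (hK : IsNoetherianGroup ↥⁅K, K⁆) {F : Set G} (hF : F.Finite) (hFK : F ⊆ K) :
    IsNoetherianGroup ↥(⁅K, K⁆ ⊔ closure F) := by
  rw [isNoetherianGroup_subgroup_iff] at hK ⊢
  intro L hL
  set π := QuotientGroup.mk' ⁅K, K⁆
  have hπ : ⁅K, K⁆.map π = ⊥ := QuotientGroup.map_mk'_self _
  set V := closure (π '' F)
  have : IsMulCommutative V := by
    rw [← commutator_self_eq_bot_iff, eq_bot_iff, ← hπ, map_commutator]
    have hVK : V ≤ K.map π := by
      rw [show V = (closure F).map π from (MonoidHom.map_closure π F).symm]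
      exact map_mono ((closure_le K).2 hFK)
    exact commutator_mono hVK hVK
  have : Group.FG V := (Group.fg_iff_subgroup_fg V).2 ((fg_iff V).2 ⟨_, rfl, hF.image π⟩)
  refine fg_of_fg_map_of_fg_inf_ker π ?_
    (hK _ (by rw [QuotientGroup.ker_mk']; exact inf_le_right))
  refine isNoetherianGroup_subgroup_iff.1 (isNoetherianGroup_of_fg_of_commGroup V) _ ?_
  calc L.map π ≤ (⁅K, K⁆ ⊔ closure F).map π := map_mono hL
    _ = V := by rw [Subgroup.map_sup, hπ, bot_sup_eq, MonoidHom.map_closure]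

end Noetherian

section Commutator

variable {G : Type*} [Group G]

theorem commutator_closure_le_of_subset_normalizer {X : Set G} {M : Subgroup G}
    (hX : X ⊆ normalizer (M : Set G)) (hXX : ∀ x ∈ X, ∀ y ∈ X, ⁅x, y⁆ ∈ M) :
    ⁅closure X, closure X⁆ ≤ M := by
  have hN : closure X ≤ normalizer (M : Set G) := (closure_le _).2 hX
  have right : ∀ a : G, (∀ x ∈ X, ⁅a, x⁆ ∈ M) → ∀ b ∈ closure X, ⁅a, b⁆ ∈ M := by
    intro a ha b hb
    induction hb using closure_induction with
    | mem x hx => exact ha x hx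
    | one => simp
    | mul x y hx _ ihx ihy =>
      rw [commutatorElement_mul_right_eq_mul_conj, mul_assoc, mul_assoc, ← mul_assoc x]
      exact M.mul_mem ihx ((mem_normalizer_iff.1 (hN hx) _).1 ihy)
    | inv x hx ih =>
      rw [commutatorElement_inv_right, ← commutatorElement_inv]
      simpa using (mem_normalizer_iff.1 (hN (inv_mem hx)) _).1 (M.inv_mem ih)
  rw [commutator_le]
  intro a ha b hb
  refine right a (fun x hx => ?_) b hb
  rw [← commutatorElement_inv]
  exact M.inv_mem (right x (hXX x hx) a ha)

theorem commutatorElement_mem_commutator_sup_closure {K Z : Subgroup G} {S : Set G}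
    (hZ : Z ≤ center G) (hK : K = closure S ⊔ Z) {t : G} (ht : t ∈ normalizer (K : Set G))
    {k : G} (hk : k ∈ K) : ⁅t, k⁆ ∈ ⁅K, K⁆ ⊔ closure ((⁅t, ·⁆) '' S) := by
  have hKc : K = closure (S ∪ Z) := by rw [Subgroup.closure_union, closure_eq, hK]
  have hK' : ∀ {y}, y ∈ closure (S ∪ Z) → y ∈ K := fun hy => hKc ▸ hy
  have htK : ∀ y ∈ K, ⁅t, y⁆ ∈ K := fun y hy => by
    rw [commutatorElement_def]
    exact K.mul_mem ((mem_normalizer_iff.1 ht y).1 hy) (K.inv_mem hy)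
  rw [hKc] at hk
  induction hk using closure_induction with
  | mem x hx =>
    rcases hx with hx | hx
    · exact mem_sup_right (subset_closure ⟨x, hx, rfl⟩)
    · rw [commutatorElement_eq_one_iff_commute.2 (mem_center_iff.1 (hZ hx) t)]
      exact one_mem _
  | one => simp
  | mul x y hx hy ihx ihy =>
    have key : ⁅t, x * y⁆ = ⁅t, x⁆ * ⁅x, ⁅t, y⁆⁆ * ⁅t, y⁆ := by
      simp only [commutatorElement_def]; group
    rw [key]
    refine mul_mem (mul_mem ihx (mem_sup_left (commutator_mem_commutator ?_ ?_))) ihy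
    · exact hK' hx
    · exact htK y (hK' hy)
  | inv x hx ih =>
    have key : ⁅t, x⁻¹⁆ = ⁅x⁻¹, ⁅t, x⁆⁻¹⁆ * ⁅t, x⁆⁻¹ := by
      simp only [commutatorElement_def]; group
    rw [key]
    refine mul_mem (mem_sup_left (commutator_mem_commutator ?_ ?_)) (inv_mem ih)
    · exact K.inv_mem (hK' hx)
    · exact K.inv_mem (htK x (hK' hx))

variable {Z K K₂ : Subgroup G} {S T : Set G}

theorem image2_commutatorElement_subset [K.Normal] (hK : K = closure S ⊔ Z)
    (hK₂ : K₂ = closure T ⊔ Z) (hK₂K : ⁅K₂, K₂⁆ ≤ K) :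
    Set.image2 (⁅·, ·⁆) T (T ∪ S) ⊆ K := by
  have hTK₂ : T ⊆ K₂ := fun t ht => hK₂ ▸ mem_sup_left (subset_closure ht)
  rintro _ ⟨t, ht, x, hx | hx, rfl⟩
  · exact hK₂K (commutator_mem_commutator (hTK₂ ht) (hTK₂ hx))
  · have hxK : x ∈ K := hK ▸ mem_sup_left (subset_closure hx)
    show ⁅t, x⁆ ∈ K
    rw [commutatorElement_def]
    exact K.mul_mem (‹K.Normal›.conj_mem x hxK t) (K.inv_mem hxK)

theorem commutator_le_commutator_sup_closure_image2 [K.Normal] (hZ : Z ≤ center G)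
    (hK : K = closure S ⊔ Z) (hK₂ : K₂ = closure T ⊔ Z) (hK₂K : ⁅K₂, K₂⁆ ≤ K) :
    ⁅K₂, K₂⁆ ≤ ⁅K, K⁆ ⊔ closure (Set.image2 (⁅·, ·⁆) T (T ∪ S)) := by
  set M := ⁅K, K⁆ ⊔ closure (Set.image2 (⁅·, ·⁆) T (T ∪ S))
  have hMK : M ≤ K := sup_le (commutator_le_self K)
    ((closure_le K).2 (image2_commutatorElement_subset hK hK₂ hK₂K))
  have hTM : ∀ t ∈ T, ∀ k ∈ K, ⁅t, k⁆ ∈ M := fun t ht k hk =>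
    sup_le_sup_left (Subgroup.closure_mono ((Set.image_subset_image2_right ht).trans
      (Set.image2_subset_left Set.subset_union_right))) _
      (commutatorElement_mem_commutator_sup_closure hZ hK
        (normalizer_eq_top (H := K) ▸ mem_top t) hk)
  have hconj : ∀ t k : G, t * k * t⁻¹ = ⁅t, k⁆ * k := fun t k => by
    rw [commutatorElement_def]; group
  have hTnorm : T ⊆ normalizer (M : Set G) := by
    intro t ht
    simp only [SetLike.mem_coe, mem_normalizer_iff]
    intro m
    refine ⟨fun hm => ?_, fun hm => ?_⟩
    · rw [hconj]; exact M.mul_mem (hTM t ht m (hMK hm)) hm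
    · have hmK : m ∈ K := by
        simpa [mul_assoc] using ‹K.Normal›.conj_mem _ (hMK hm) t⁻¹
      rw [hconj] at hm
      simpa only [inv_mul_cancel_left] using M.mul_mem (M.inv_mem (hTM t ht m hmK)) hm
  rw [hK₂, ← closure_eq Z, ← Subgroup.closure_union]
  apply commutator_closure_le_of_subset_normalizer
  · rintro x (hx | hx)
    · exact hTnorm hx
    · exact center_le_normalizer _ (hZ hx)
  · have hcomm : ∀ x y : G, x ∈ Z → ⁅x, y⁆ = 1 := fun x y hx =>
      commutatorElement_eq_one_iff_commute.2 (mem_center_iff.1 (hZ hx) y).symm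
    rintro x (hx | hx) y (hy | hy)
    · exact mem_sup_right (subset_closure (Set.mem_image2_of_mem hx (Or.inl hy)))
    · rw [← commutatorElement_inv, hcomm y x hy, inv_one]; exact M.one_mem
    · rw [hcomm x y hx]; exact M.one_mem
    · rw [hcomm x y hx]; exact M.one_mem

end Commutator

section CentralExtension

variable {G H : Type*} [Group G] [Group H] {φ : G →* H}

theorem Subgroup.FG.exists_comap_eq_closure_sup_ker (hφ : Function.Surjective φ)
    {N : Subgroup H} (hN : N.FG) : ∃ S : Set G, S.Finite ∧ N.comap φ = closure S ⊔ φ.ker := by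
  obtain ⟨A, rfl, hA⟩ := (fg_iff N).1 hN
  refine ⟨Function.surjInv hφ '' A, hA.image _, ?_⟩
  rw [← comap_map_eq, MonoidHom.map_closure, ← Set.image_comp, Function.comp_surjInv,
    Set.image_id]

theorem isNoetherianGroup_commutator_comap_of_commutator_le (hφ : Function.Surjective φ)
    (hker : φ.ker ≤ center G) {N₁ N₂ : Subgroup H} [N₁.Normal] (hN₁ : N₁.FG) (hN₂ : N₂.FG)
    (hN₂N₁ : ⁅N₂, N₂⁆ ≤ N₁) (h : IsNoetherianGroup ↥⁅N₁.comap φ, N₁.comap φ⁆) :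
    IsNoetherianGroup ↥⁅N₂.comap φ, N₂.comap φ⁆ := by
  obtain ⟨S, hS, hK⟩ := hN₁.exists_comap_eq_closure_sup_ker hφ
  obtain ⟨T, hT, hK₂⟩ := hN₂.exists_comap_eq_closure_sup_ker hφ
  have hK₂K : ⁅N₂.comap φ, N₂.comap φ⁆ ≤ N₁.comap φ := by
    rw [← map_le_iff_le_comap, map_commutator, map_comap_eq_self_of_surjective hφ]
    exact hN₂N₁
  have hF := isNoetherianGroup_commutator_sup_closure h (hT.image2 _ (hT.union hS))
    (image2_commutatorElement_subset hK hK₂ hK₂K)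
  exact isNoetherianGroup_subgroup_iff.2 fun L hL => isNoetherianGroup_subgroup_iff.1 hF L
    (hL.trans (commutator_le_commutator_sup_closure_image2 hker hK hK₂ hK₂K))

theorem isNoetherianGroup_commutator_of_central_extension (hφ : Function.Surjective φ)
    (hker : φ.ker ≤ center G) [Group.IsSolvable H] (hH : IsNoetherianGroup H) :
    IsNoetherianGroup (commutator G) := by
  obtain ⟨n, hn⟩ := Group.IsSolvable.solvable (G := H)
  have key : ∀ i ≤ n,
      IsNoetherianGroup ↥⁅(derivedSeries H i).comap φ, (derivedSeries H i).comap φ⁆ := by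
    refine fun i hi => Nat.decreasingInduction (fun k _ ih => ?_) ?_ hi
    · exact isNoetherianGroup_commutator_comap_of_commutator_le hφ hker (hH _) (hH _)
        (derivedSeries_succ H k).ge ih
    · have : ⁅(derivedSeries H n).comap φ, (derivedSeries H n).comap φ⁆ = ⊥ := by
        rw [hn, MonoidHom.comap_bot, eq_bot_iff, ← commutator_center_left φ.ker]
        exact commutator_mono hker le_rfl
      rw [this, isNoetherianGroup_subgroup_iff]
      exact fun L hL => le_bot_iff.1 hL ▸ FG.bot
  have := key 0 n.zero_le
  rwa [derivedSeries_zero, comap_top, ← _root_.commutator_def] at this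

theorem isSolvable_of_ker_le_center (hker : φ.ker ≤ center G) [Group.IsSolvable H] :
    Group.IsSolvable G :=
  have : Group.IsSolvable φ.ker :=
    Group.isSolvable_of_comm fun a b => Subtype.ext (mem_center_iff.1 (hker b.2) a)
  Group.isSolvable_of_ker_le_range φ.ker.subtype φ (range_subtype _).ge

end CentralExtension

theorem commutator_polycyclic_of_central_extension_of_polycyclic
    {G H : Type*} [Group G] [Group H] (φ : G →* H)
    (hsurj : Function.Surjective φ) (hker : φ.ker ≤ Subgroup.center G)
    (hH : IsPolycyclic H) :
    IsPolycyclic ↥(commutator G) := by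
  obtain ⟨hsolv, hnoeth⟩ := hH
  have : Group.IsSolvable H := hsolv
  have : Group.IsSolvable G := isSolvable_of_ker_le_center hker
  exact ⟨(inferInstance : Group.IsSolvable _),
    isNoetherianGroup_commutator_of_central_extension hsurj hker hnoeth⟩
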